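/- Consider the k-fold parallel repetition of NC_00(C_5) (k ≥ 1): the 5k players form k groups of 5 (each group indexed by ℤ/5), the question is a k-tuple of types drawn independently and uniformly from the 6 types of NC_00(C_5) (one per group), each player answers according to a function f : {0,1} → {0,1} of their own type bit, the global answer wins iff every group's answers win on that group's type, and player j's payoff is v_{answer_j} if the global answer wins and 0 otherwise, where 0 ≤ v_0 ≤ v_1. Then for every pure local strategy profile, the expected payoff of every player is at most (5/6)^k · v_1, and hence the social welfare (the average of the players' expected payoffs) is at most (5/6)^k · v_1. -/

import Mathlib

open Finset

/-- The 6 questions/types of the game on the 5-cycle: `none` is `Tₐ = 11111`;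
`some i` is the question `Tᵢ` giving input bit 1 to player `i` and 0 to the others. -/
abbrev C5Type := Option (ZMod 5)

/-- Input (type) bit of player `j` in question `t` of `MCG(C₅)`/`NC₀₀(C₅)`. -/
def inputBit : C5Type → ZMod 5 → ZMod 2
  | none, _ => 1
  | some i, j => if j = i then 1 else 0

/-- The involved set of question `t`: all five players for `Tₐ`;
`{i-1, i, i+1}` for `Tᵢ`. -/
def involvedSet : C5Type → Finset (ZMod 5)
  | none => Finset.univ
  | some i => {i - 1, i, i + 1}

/-- The target parity bit of question `t`: `1` for `Tₐ` and `0` for each `Tᵢ`. -/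
def targetBit : C5Type → ZMod 2
  | none => 1
  | some _ => 0

/-- Expected payoff of player `p` in the `k`-fold parallel repetition of
`NC₀₀(C₅)`: the `5k` players are indexed by `Fin k × ZMod 5` (group, vertex);
the question is a `k`-tuple `q` of types, independent and uniform (one per
group); each player answers a function of their own type bit; the global answer
wins iff every group wins on its own type, in which case player `p` receives
`v_{answer_p}`, and `0` otherwise. -/
noncomputable def kFoldUtil (k : ℕ) (v0 v1 : ℝ)
    (f : Fin k × ZMod 5 → ZMod 2 → ZMod 2) (p : Fin k × ZMod 5) : ℝ :=
  (∑ q : Fin k → C5Type,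
    if ∀ g : Fin k,
        ∑ j ∈ involvedSet (q g), f (g, j) (inputBit (q g) j) = targetBit (q g)
    then (if f p (inputBit (q p.1) p.2) = 1 then v1 else v0) else 0) / 6 ^ k

/-!
Summing the constraints of the five types `Tᵢ` counts every answer to type bit 0 twice and
every answer to type bit 1 once, so mod 2 it is the left side of the `Tₐ` constraint, whose
target is 1 rather than 0: every local strategy loses on some type. Hence in each group at
most 5 of the 6 types are won, the groups being independent at most `5^k` of the `6^k`
questions are won, and on a won question a player gets at most `v₁`.
-/

/-- `g j b` is the answer of vertex `j` when its type bit is `b`. -/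
def Wins (g : ZMod 5 → ZMod 2 → ZMod 2) (t : C5Type) : Prop :=
  ∑ j ∈ involvedSet t, g j (inputBit t j) = targetBit t

instance (g : ZMod 5 → ZMod 2 → ZMod 2) : DecidablePred (Wins g) :=
  fun _ => inferInstanceAs (Decidable (_ = _))

lemma sum_involvedSet_some (g : ZMod 5 → ZMod 2 → ZMod 2) (i : ZMod 5) :
    ∑ j ∈ involvedSet (some i), g j (inputBit (some i) j) =
      g (i - 1) 0 + g i 1 + g (i + 1) 0 := by
  have hpred : i - 1 ≠ i := by revert i; decide
  have hsucc : i ≠ i + 1 := by revert i; decide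
  have hpred_succ : i - 1 ≠ i + 1 := by revert i; decide
  simp [involvedSet, inputBit, hpred, hsucc, hsucc.symm, hpred_succ, add_assoc]

lemma sum_sum_involvedSet_some (g : ZMod 5 → ZMod 2 → ZMod 2) :
    ∑ i, ∑ j ∈ involvedSet (some i), g j (inputBit (some i) j) =
      ∑ j ∈ involvedSet none, g j (inputBit none j) := by
  simp only [sum_involvedSet_some, sum_add_distrib]
  have hpred : ∑ i, g (i - 1) 0 = ∑ i, g i 0 := Equiv.sum_comp (Equiv.subRight 1) (g · 0)
  have hsucc : ∑ i, g (i + 1) 0 = ∑ i, g i 0 := Equiv.sum_comp (Equiv.addRight 1) (g · 0)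
  rw [hpred, hsucc, add_right_comm, CharTwo.add_self_eq_zero, zero_add]
  simp [involvedSet, inputBit]

lemma exists_not_wins (g : ZMod 5 → ZMod 2 → ZMod 2) : ∃ t, ¬ Wins g t := by
  by_contra! hwin
  have h := sum_sum_involvedSet_some g
  rw [hwin none, sum_congr rfl fun i _ => hwin (some i)] at h
  simp [targetBit] at h

lemma card_filter_wins_le (g : ZMod 5 → ZMod 2 → ZMod 2) : #{t | Wins g t} ≤ 5 := by
  obtain ⟨t, ht⟩ := exists_not_wins g
  have := card_lt_card (filter_ssubset.mpr ⟨t, mem_univ t, ht⟩)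
  simpa [Nat.lt_succ_iff] using this

lemma card_filter_forall_le_pow {ι α : Type*} [Fintype ι] [DecidableEq ι] [Fintype α]
    (W : ι → α → Prop) [∀ i, DecidablePred (W i)] [DecidablePred fun q : ι → α => ∀ i, W i (q i)]
    {m : ℕ} (hW : ∀ i, #{a | W i a} ≤ m) :
    #{q : ι → α | ∀ i, W i (q i)} ≤ m ^ Fintype.card ι := by
  have : ({q : ι → α | ∀ i, W i (q i)} : Finset _) = Fintype.piFinset fun i => {a | W i a} := by
    ext q; simp [Fintype.mem_piFinset]
  rw [this, Fintype.card_piFinset]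
  exact prod_le_pow_card _ _ _ fun i _ => hW i

lemma sum_ite_le_card_filter_mul {α R : Type*} [Fintype α] [Semiring R] [PartialOrder R]
    [IsOrderedAddMonoid R] (P : α → Prop) [DecidablePred P] (u : α → R) {c : R} (hu : ∀ a, u a ≤ c) :
    ∑ a, (if P a then u a else 0) ≤ #{a | P a} * c := by
  rw [← sum_filter, ← nsmul_eq_mul]
  exact sum_le_card_nsmul _ _ _ fun a _ => hu a

lemma kFoldUtil_le (k : ℕ) (v0 v1 : ℝ) (hv1 : 0 ≤ v1) (hv01 : v0 ≤ v1)
    (f : Fin k × ZMod 5 → ZMod 2 → ZMod 2) (p : Fin k × ZMod 5) :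
    kFoldUtil k v0 v1 f p ≤ (5 / 6) ^ k * v1 := by
  have hwin : #{q : Fin k → C5Type | ∀ g, Wins (fun j => f (g, j)) (q g)} ≤ 5 ^ k := by
    have := card_filter_forall_le_pow _ fun g => card_filter_wins_le fun j => f (g, j)
    rwa [Fintype.card_fin] at this
  unfold kFoldUtil
  rw [div_le_iff₀ (by positivity)]
  calc _ ≤ #{q : Fin k → C5Type | ∀ g, Wins (fun j => f (g, j)) (q g)} * v1 :=
        sum_ite_le_card_filter_mul _ _ fun q => by split_ifs <;> linarith
    _ ≤ 5 ^ k * v1 := by gcongr; exact_mod_cast hwin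
    _ = (5 / 6) ^ k * v1 * 6 ^ k := by rw [div_pow]; field_simp

theorem kFold_payoff_bound_general (k : ℕ) (v0 v1 : ℝ)
    (hv0 : 0 ≤ v0) (hv01 : v0 ≤ v1)
    (f : Fin k × ZMod 5 → ZMod 2 → ZMod 2) :
    (∀ p : Fin k × ZMod 5, kFoldUtil k v0 v1 f p ≤ (5 / 6) ^ k * v1) ∧
    (∑ p : Fin k × ZMod 5, kFoldUtil k v0 v1 f p) / (5 * k)
      ≤ (5 / 6) ^ k * v1 := by
  have hv1 : 0 ≤ v1 := hv0.trans hv01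
  refine ⟨kFoldUtil_le k v0 v1 hv1 hv01 f, div_le_of_le_mul₀ (by positivity) (by positivity) ?_⟩
  calc ∑ p : Fin k × ZMod 5, kFoldUtil k v0 v1 f p
      ≤ Fintype.card (Fin k × ZMod 5) • ((5 / 6) ^ k * v1) :=
        sum_le_card_nsmul _ _ _ fun p _ => kFoldUtil_le k v0 v1 hv1 hv01 f p
    _ = (5 / 6) ^ k * v1 * (5 * k) := by
      simp only [Fintype.card_prod, Fintype.card_fin, ZMod.card, nsmul_eq_mul, Nat.cast_mul,
        Nat.cast_ofNat]
      ring

/-- **Payoff and social-welfare bound for the `k`-fold repetition of `NC₀₀(C₅)`.**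
For `k ≥ 1`, `0 ≤ v0 ≤ v1`, every pure local strategy profile of the `5k`
players gives every player an expected payoff of at most `(5/6)^k * v1`; hence
the social welfare (the average of the players' expected payoffs) is at most
`(5/6)^k * v1`. -/
theorem kFold_payoff_bound (k : ℕ) (hk : 1 ≤ k) (v0 v1 : ℝ)
    (hv0 : 0 ≤ v0) (hv01 : v0 ≤ v1)
    (f : Fin k × ZMod 5 → ZMod 2 → ZMod 2) :
    (∀ p : Fin k × ZMod 5, kFoldUtil k v0 v1 f p ≤ (5 / 6) ^ k * v1) ∧
    (∑ p : Fin k × ZMod 5, kFoldUtil k v0 v1 f p) / (5 * k)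
      ≤ (5 / 6) ^ k * v1 :=
  kFold_payoff_bound_general k v0 v1 hv0 hv01 f
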